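/- In the two-point dual counterexample, for Φ(w₁, w₂) = (1/2)|w₁ − w₂| − (1/2)f*(−w₁) − (1/2)f*(−w₂) where f* is twice continuously differentiable with f*''(−r*) > 0 and r* is the unique maximizer of r ↦ −f*(−r), there exists δ₀ > 0 such that for all 0 < |δ| < δ₀, Φ(r*+δ, r*−δ) > Φ(r*, r*). Hence Φ does not have a unique maximizer at the diagonal point. -/

import Mathlib

/-- Two-point dual counterexample: for `Φ(w₁,w₂) = (1/2)|w₁-w₂| - (1/2)f*(-w₁) - (1/2)f*(-w₂)`
with `f*` twice continuously differentiable, strictly convex, `f*''(-r*) > 0`, and `r*` the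
unique maximizer of `r ↦ -f*(-r)`, there is `δ₀ > 0` such that for all `0 < |δ| < δ₀`,
`Φ(r*+δ, r*-δ) > Φ(r*, r*)`. -/
theorem stmt7 (fstar : ℝ → ℝ) (hsmooth : ContDiff ℝ 2 fstar)
    (hconv : StrictConvexOn ℝ Set.univ fstar)
    (rstar : ℝ)
    (hmax : ∀ r : ℝ, r ≠ rstar → -fstar (-r) < -fstar (-rstar))
    (hsecond : 0 < deriv (deriv fstar) (-rstar)) :
    let Φ : ℝ → ℝ → ℝ := fun w₁ w₂ =>
      (1/2) * |w₁ - w₂| - (1/2) * fstar (-w₁) - (1/2) * fstar (-w₂)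
    ∃ δ₀ > 0, ∀ δ : ℝ, δ ≠ 0 → |δ| < δ₀ → Φ rstar rstar < Φ (rstar + δ) (rstar - δ) := by
  intro Φ
  have hd : DifferentiableAt ℝ fstar (-rstar) :=
    (hsmooth.differentiable (by norm_num)).differentiableAt
  set c := deriv fstar (-rstar) with hc
  have hdd : HasDerivAt fstar c (-rstar) := hd.hasDerivAt
  have hu1 : HasDerivAt (fun δ : ℝ => -rstar - δ) (-1) 0 := by
    simpa using (hasDerivAt_id' (0:ℝ)).const_sub (-rstar)
  have hu2 : HasDerivAt (fun δ : ℝ => -rstar + δ) 1 0 := by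
    simpa using (hasDerivAt_id' (0:ℝ)).const_add (-rstar)
  have h1 : HasDerivAt (fun δ : ℝ => fstar (-rstar - δ)) (c * (-1)) 0 := by
    refine HasDerivAt.comp 0 ?_ hu1
    simpa using hdd
  have h2 : HasDerivAt (fun δ : ℝ => fstar (-rstar + δ)) (c * 1) 0 := by
    refine HasDerivAt.comp 0 ?_ hu2
    simpa using hdd
  set G : ℝ → ℝ := fun δ =>
    (1/2) * fstar (-rstar - δ) + (1/2) * fstar (-rstar + δ) - fstar (-rstar) with hGdef
  have hG : HasDerivAt G 0 0 := by
    have := (((h1.const_mul (1/2:ℝ)).add (h2.const_mul (1/2:ℝ))).sub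
      (hasDerivAt_const (0:ℝ) (fstar (-rstar))))
    exact this.congr_deriv (by ring)
  have hG0 : G 0 = 0 := by simp [hGdef]; ring
  have hlo : (fun δ : ℝ => G δ) =o[nhds 0] fun δ => δ := by
    have := hG.isLittleO
    simpa [hG0] using this
  have hev : ∀ᶠ δ in nhds (0:ℝ), ‖G δ‖ ≤ (1/2) * ‖δ‖ :=
    hlo.def (by norm_num)
  rw [Metric.eventually_nhds_iff] at hev
  obtain ⟨ε, hε, hball⟩ := hev
  refine ⟨ε, hε, fun δ hδ hδε => ?_⟩
  have hbd : |G δ| ≤ (1/2) * |δ| := by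
    have := hball (y := δ) (by simpa [Real.dist_eq] using hδε)
    simpa [Real.norm_eq_abs] using this
  have habs : 0 < |δ| := abs_pos.mpr hδ
  have hGlt : G δ < |δ| := lt_of_le_of_lt (le_trans (le_abs_self _) hbd) (by linarith)
  have e1 : -(rstar + δ) = -rstar - δ := by ring
  have e2 : -(rstar - δ) = -rstar + δ := by ring
  have e3 : rstar + δ - (rstar - δ) = 2 * δ := by ring
  simp only [Φ, sub_self, abs_zero, e1, e2, e3, abs_mul]
  have h2d : |(2:ℝ)| = 2 := by norm_num
  rw [h2d]
  have := hGlt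
  simp only [hGdef] at this
  linarith
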